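/- For all integers s and t with 2 ≤ s ≤ t − 1, the polynomial w₂^{2^{s−1}−1}·(g_{2^t−2^{s−1}−2})² + w₂^{2^{s−1}−2}·g_{2^{t+1}−2^s−2} belongs to w₃I_{2^{t+1}−2^s}. -/
import Mathlib


open MvPolynomial Finset

noncomputable section

/-- `R2 = (ℤ/2)[w₂, w₃]`, the polynomial ring in two variables over `ℤ/2ℤ`. -/
abbrev R2 : Type := MvPolynomial (Fin 2) (ZMod 2)

/-- The variable `w₂`. -/
def w2 : R2 := X 0

/-- The variable `w₃`. -/
def w3 : R2 := X 1

/-- The polynomials `g_r`: `g₀ = 1`, `g₁ = 0`, `g₂ = w₂`,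
`g_{r+3} = w₂ g_{r+1} + w₃ g_r`. -/
def g : ℕ → R2
  | 0 => 1
  | 1 => 0
  | 2 => w2
  | (r+3) => w2 * g (r+1) + w3 * g r

/-- The ideal `I_n = (g_{n-2}, g_{n-1}, g_n)`. -/
def I (n : ℕ) : Ideal R2 := Ideal.span {g (n-2), g (n-1), g n}

lemma htwo : (2 : R2) = 0 := by exact_mod_cast CharP.cast_eq_zero R2 2

lemma grec (r : ℕ) : g (r+3) = w2 * g (r+1) + w3 * g r := rfl

/-- Doubling formulas: `g_{2j+2} = g_{j+1}² + w₂ g_j²` and `g_{2j+3} = w₃ g_j²`. -/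
lemma dbl : ∀ j : ℕ, g (2*j+2) = (g (j+1))^2 + w2*(g j)^2 ∧ g (2*j+3) = w3 * (g j)^2 := by
  intro j
  induction j using Nat.strong_induction_on with
  | _ j ih =>
    match j with
    | 0 =>
      constructor
      · show w2 = (0:R2)^2 + w2 * 1^2
        ring
      · show w2 * 0 + w3 * 1 = w3 * 1^2
        ring
    | 1 =>
      constructor
      · show w2 * w2 + w3 * 0 = w2^2 + w2 * 0^2
        ring
      · show w2 * (w2 * 0 + w3 * 1) + w3 * w2 = w3 * 0^2
        linear_combination w2 * w3 * htwo
    | (j+2) =>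
      obtain ⟨e1, o1⟩ := ih (j+1) (by omega)
      obtain ⟨e0, o0⟩ := ih j (by omega)
      have h1 : g (2*(j+2)+2) = w2 * g (2*(j+1)+2) + w3 * g (2*j+3) := by
        have : 2*(j+2)+2 = (2*j+3)+3 := by ring
        rw [this, grec]
        congr 2
      have h2 : g (2*(j+2)+3) = w2 * g (2*(j+1)+3) + w3 * g (2*(j+1)+2) := by
        have : 2*(j+2)+3 = (2*j+4)+3 := by ring
        rw [this, grec]
        congr 2
      have h3 : g (j+3) = w2 * g (j+1) + w3 * g j := grec j
      constructor
      · rw [h1, e1, o0]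
        linear_combination (w2*w3*(g j)*(g (j+1)) - (g (j+3))^2 + w2^2*(g (j+1))^2
            + w3^2*(g j)^2) * htwo + (g (j+3) + w2 * g (j+1) + w3 * g j) * h3
      · rw [h2, o1, e1]
        linear_combination w2 * w3 * (g (j+1))^2 * htwo

/-- `g` vanishes at `4·2^i - 3`. -/
lemma gzero : ∀ i : ℕ, g (2^i*4 - 3) = 0 := by
  intro i
  induction i with
  | zero => rfl
  | succ i ih =>
    have h1 : 1 ≤ (2:ℕ)^i := Nat.one_le_two_pow
    have h2 : (2:ℕ)^(i+1) = 2^i*2 := pow_succ 2 i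
    have h3 : 2^(i+1)*4 - 3 = 2*(2^i*4 - 3)+3 := by omega
    rw [h3, (dbl (2^i*4-3)).2, ih]
    ring

lemma memI (n : ℕ) : g (n-2) ∈ I n ∧ g (n-1) ∈ I n ∧ g n ∈ I n := by
  refine ⟨Ideal.subset_span ?_, Ideal.subset_span ?_, Ideal.subset_span ?_⟩ <;> simp

lemma I4 (b : ℕ) : I (2*b+4) = Ideal.span {g (2*b+2), g (2*b+3), g (2*b+4)} := rfl

/-- If `p ∈ I_{2b+4}` then `w₃³ p² ∈ I_{4b+8}`. -/
lemma sq_mem (b : ℕ) : ∀ p ∈ I (2*b+4), w3^3 * p^2 ∈ I (4*b+8) := by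
  intro p hp
  have hI : I (4*b+8) = Ideal.span {g (4*b+6), g (4*b+7), g (4*b+8)} := rfl
  rw [I4] at hp
  induction hp using Submodule.span_induction with
  | mem x hx =>
    rw [hI]
    have m0 : g (4*b+6) ∈ Ideal.span {g (4*b+6), g (4*b+7), g (4*b+8)} :=
      Ideal.subset_span (by simp)
    have m1 : g (4*b+7) ∈ Ideal.span {g (4*b+6), g (4*b+7), g (4*b+8)} :=
      Ideal.subset_span (by simp)
    have m2 : g (4*b+8) ∈ Ideal.span {g (4*b+6), g (4*b+7), g (4*b+8)} :=
      Ideal.subset_span (by simp)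
    have e7 : g (4*b+7) = w3 * (g (2*b+2))^2 := by
      have := (dbl (2*b+2)).2; rw [show 2*(2*b+2)+3 = 4*b+7 by ring] at this; exact this
    have e9 : g (4*b+9) = w3 * (g (2*b+3))^2 := by
      have := (dbl (2*b+3)).2; rw [show 2*(2*b+3)+3 = 4*b+9 by ring] at this; exact this
    have e11 : g (4*b+11) = w3 * (g (2*b+4))^2 := by
      have := (dbl (2*b+4)).2; rw [show 2*(2*b+4)+3 = 4*b+11 by ring] at this; exact this
    have r9 : g (4*b+9) = w2 * g (4*b+7) + w3 * g (4*b+6) := by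
      have := grec (4*b+6)
      rw [show 4*b+6+3 = 4*b+9 by ring, show 4*b+6+1 = 4*b+7 by ring] at this; exact this
    have r11 : g (4*b+11) = w2 * g (4*b+9) + w3 * g (4*b+8) := by
      have := grec (4*b+8)
      rw [show 4*b+8+3 = 4*b+11 by ring, show 4*b+8+1 = 4*b+9 by ring] at this; exact this
    rcases hx with h | h | h
    · rw [h, show w3^3 * (g (2*b+2))^2 = w3^2 * (w3 * (g (2*b+2))^2) by ring, ← e7]
      exact Ideal.mul_mem_left _ _ m1
    · rw [h, show w3^3 * (g (2*b+3))^2 = w3^2 * (w3 * (g (2*b+3))^2) by ring, ← e9, r9]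
      exact Ideal.mul_mem_left _ _
        (Ideal.add_mem _ (Ideal.mul_mem_left _ _ m1) (Ideal.mul_mem_left _ _ m0))
    · rw [h, show w3^3 * (g (2*b+4))^2 = w3^2 * (w3 * (g (2*b+4))^2) by ring, ← e11, r11, r9]
      refine Ideal.mul_mem_left _ _
        (Ideal.add_mem _ (Ideal.mul_mem_left _ _ ?_) (Ideal.mul_mem_left _ _ m2))
      exact Ideal.add_mem _ (Ideal.mul_mem_left _ _ m1) (Ideal.mul_mem_left _ _ m0)
  | zero => rw [show w3^3 * (0:R2)^2 = 0 by ring]; exact Ideal.zero_mem _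
  | add x y hx hy ihx ihy =>
    have : w3^3*(x+y)^2 = w3^3*x^2 + w3^3*y^2 + (w3^3*x*y)*2 := by ring
    rw [this, htwo]
    simpa using Ideal.add_mem _ ihx ihy
  | smul a x hx ihx =>
    have : w3^3*(a • x)^2 = a^2 * (w3^3*x^2) := by
      rw [smul_eq_mul]; ring
    rw [this]
    exact Ideal.mul_mem_left _ _ ihx

/-- The statement of the proposition, parametrized by `a = 2^{s-1} - 2`, `b = 2^t - 2^{s-1} - 2`. -/
def Cp (a b : ℕ) : Prop :=
  ∃ q ∈ I (2*b+4), w2^(a+1) * (g b)^2 + w2^a * g (2*b+2) = w3 * q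

lemma base (b : ℕ) (hb : g (b+1) = 0) : Cp 0 b := by
  refine ⟨0, Ideal.zero_mem _, ?_⟩
  rw [(dbl b).1, hb]
  linear_combination w2*(g b)^2 * htwo

lemma step (a b : ℕ) (h : Cp a b) : Cp (2*a+2) (2*b+2) := by
  obtain ⟨q, hq, he⟩ := h
  refine ⟨w3^3 * q^2 + w2^(2*a) * g (4*b+7), ?_, ?_⟩
  · have h1 : w3^3*q^2 ∈ I (4*b+8) := sq_mem b q hq
    have h2 : g (4*b+7) ∈ I (4*b+8) := by
      have := (memI (4*b+8)).2.1
      rwa [show 4*b+8-1 = 4*b+7 by omega] at this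
    have h3 : 2*(2*b+2)+4 = 4*b+8 := by ring
    rw [h3]
    exact Ideal.add_mem _ h1 (Ideal.mul_mem_left _ _ h2)
  · have e7 : g (4*b+7) = w3 * (g (2*b+2))^2 := by
      have := (dbl (2*b+2)).2; rw [show 2*(2*b+2)+3 = 4*b+7 by ring] at this; exact this
    have e6 : g (4*b+6) = (g (2*b+3))^2 + w2 * (g (2*b+2))^2 := by
      have := (dbl (2*b+2)).1
      rw [show 2*(2*b+2)+2 = 4*b+6 by ring, show 2*b+2+1 = 2*b+3 by ring] at this; exact this
    have e3 : g (2*b+3) = w3 * (g b)^2 := (dbl b).2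
    rw [show 2*(2*b+2)+2 = 4*b+6 by ring, e6, e3, e7]
    have key : w2^(2*a+2) * (g b)^4 + w2^(2*a) * (g (2*b+2))^2
        = w3^2 * q^2 + (w2^(2*a+1)*(g b)^2*g (2*b+2)) * 2 := by
      linear_combination (w2^(a+1)*(g b)^2 + w2^a * g (2*b+2) + w3*q) * he
        + (-2*w2^(2*a+1)*(g b)^2*(g (2*b+2))) * htwo
    linear_combination w3^2 * key + (w3^2*w2^(2*a+1)*(g b)^2*(g (2*b+2))
      + w2^(2*a+3)*(g (2*b+2))^2 - w2^(2*a)*w3^2*(g (2*b+2))^2) * htwo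

lemma chain (i b : ℕ) (hb : g (b+1) = 0) :
    ∃ a' b', a' + 2 = 2^(i+1) ∧ b' + 2 = 2^i * (b+2) ∧ Cp a' b' := by
  induction i with
  | zero => exact ⟨0, b, by norm_num, by ring_nf, base b hb⟩
  | succ i ih =>
    obtain ⟨a', b', ha, hbb, hc⟩ := ih
    refine ⟨2*a'+2, 2*b'+2, ?_, ?_, step a' b' hc⟩
    · rw [pow_succ]; omega
    · rw [pow_succ]
      have : 2^i * 2 * (b+2) = (2^i * (b+2)) * 2 := by ring
      omega

/-- Proposition 4.5: for `2 ≤ s ≤ t - 1`,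
`w₂^{2^{s-1}-1} (g_{2^t-2^{s-1}-2})² + w₂^{2^{s-1}-2} g_{2^{t+1}-2^s-2} ∈ w₃I_{2^{t+1}-2^s}`. -/
theorem prop_4_5 (s t : ℕ) (hs : 2 ≤ s) (hst : s ≤ t - 1) :
    ∃ q ∈ I (2 ^ (t + 1) - 2 ^ s),
      w2 ^ (2 ^ (s - 1) - 1) * (g (2 ^ t - 2 ^ (s - 1) - 2)) ^ 2
        + w2 ^ (2 ^ (s - 1) - 2) * g (2 ^ (t + 1) - 2 ^ s - 2) = w3 * q := by
  obtain ⟨i, rfl⟩ : ∃ i, s = i + 2 := ⟨s - 2, by omega⟩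
  obtain ⟨u, hu3, rfl⟩ : ∃ u, 3 ≤ u ∧ t = i + u := ⟨t - i, by omega, by omega⟩
  have hA : 1 ≤ (2:ℕ)^i := Nat.one_le_two_pow
  have hB : 8 ≤ (2:ℕ)^u := by
    calc (8:ℕ) = 2^3 := by norm_num
    _ ≤ 2^u := Nat.pow_le_pow_right (by norm_num) hu3
  have hbz : g (2^u - 4 + 1) = 0 := by
    have h1 : (2:ℕ)^(u-2)*4 = 2^u := by
      rw [show (4:ℕ) = 2^2 by norm_num, ← pow_add]
      congr 1; omega
    have h2 : 2^u - 4 + 1 = 2^(u-2)*4 - 3 := by omega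
    rw [h2]; exact gzero (u-2)
  obtain ⟨a', b', ha, hb, q, hq, he⟩ := chain i (2^u - 4) hbz
  have k1 : 2^i * (2^u - 4 + 2) + 2^i * 2 = 2^i * 2^u := by
    rw [← Nat.mul_add]; congr 1; omega
  have k2 : (2:ℕ)^(i+u) = 2^i * 2^u := pow_add 2 i u
  have k3 : (2:ℕ)^(i+u+1) = 2^i * 2^u * 2 := by rw [pow_succ, k2]
  have k4 : (2:ℕ)^(i+1) = 2^i * 2 := pow_succ 2 i
  have k5 : (2:ℕ)^(i+2) = 2^i * 2 * 2 := by rw [pow_succ, k4]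
  have es1 : i + 2 - 1 = i + 1 := rfl
  rw [es1]
  have h1 : 2^(i+1) - 1 = a' + 1 := by omega
  have h2 : 2^(i+u) - 2^(i+1) - 2 = b' := by omega
  have h3 : 2^(i+1) - 2 = a' := by omega
  have h4 : 2^(i+u+1) - 2^(i+2) - 2 = 2*b' + 2 := by omega
  have h5 : 2^(i+u+1) - 2^(i+2) = 2*b' + 4 := by omega
  rw [h1, h2, h3, h4, h5]
  exact ⟨q, hq, he⟩

end
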